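/- arXiv:2406.15680 — 8 statements merged into one kernel-verified Lean document; each statement's English description precedes it below -/
import Mathlib

section
/- Let P = (λ, p) be a finitely supported distribution on ℝ^d whose support points p_1, …, p_n are affinely independent. Then a finitely supported distribution Q = (μ, q) is a simple mean-preserving contraction of P if and only if every support point q_j of Q lies in the convex hull of {p_1, …, p_n} and the barycenters coincide: Σ_j μ_j q_j = Σ_i λ_i p_i. -/
lemma extract_coeffs {n d : ℕ} (p : Fin n → Fin d → ℝ) {x : Fin d → ℝ}
    (hx : x ∈ convexHull ℝ (Set.range p)) :
    ∃ a : Fin n → ℝ, (∀ i, 0 ≤ a i) ∧ ∑ i, a i = 1 ∧ ∑ i, a i • p i = x := by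
  rw [convexHull_range_eq_exists_affineCombination] at hx
  obtain ⟨s, wt, h0, h1, hc⟩ := hx
  rw [Finset.affineCombination_eq_linear_combination s p wt h1] at hc
  refine ⟨fun i => if i ∈ s then wt i else 0, ?_, ?_, ?_⟩
  · intro i; dsimp only; split
    · exact h0 _ ‹_›
    · exact le_refl 0
  · rw [Finset.sum_ite_mem, Finset.univ_inter, h1]
  · rw [← hc]
    simp only [ite_smul, zero_smul]
    rw [Finset.sum_ite_mem, Finset.univ_inter]

/-- A finitely supported distribution `Q = (w, q)` is a simple mean-preserving contraction
of `P = (lam, p)` (both on `ℝ^d`) iff, when the support of `P` is affinely independent,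
every support point of `Q` lies in the convex hull of the support of `P` and the
barycenters coincide. -/
theorem smpc_iff_convexHull_and_barycenter_of_affineIndependent
    (d n m : ℕ)
    (lam : Fin n → ℝ) (p : Fin n → (Fin d → ℝ))
    (hlam : ∀ i, 0 < lam i) (hlam1 : ∑ i, lam i = 1)
    (haff : ∀ c : Fin n → ℝ, ∑ i, c i • p i = 0 → ∑ i, c i = 0 → c = 0)
    (w : Fin m → ℝ) (q : Fin m → (Fin d → ℝ))
    (hw : ∀ j, 0 < w j) (hw1 : ∑ j, w j = 1) :
    (∃ G : Fin n → Fin m → ℝ,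
        (∀ i j, 0 ≤ G i j) ∧ (∀ i, ∑ j, G i j = 1) ∧
        (∀ j, ∑ i, lam i * G i j = w j) ∧
        (∀ j, ∑ i, (lam i * G i j) • p i = w j • q j))
    ↔ ((∀ j, q j ∈ convexHull ℝ (Set.range p)) ∧
        ∑ j, w j • q j = ∑ i, lam i • p i) := by
  constructor
  · rintro ⟨G, hG0, hGrow, hGcol, hGbar⟩
    constructor
    · intro j
      have hwj : (w j) ≠ 0 := (hw j).ne'
      have hq : q j = ∑ i, (lam i * G i j / w j) • p i := by
        calc q j = (w j)⁻¹ • (w j • q j) := by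
              rw [smul_smul, inv_mul_cancel₀ hwj, one_smul]
          _ = (w j)⁻¹ • ∑ i, (lam i * G i j) • p i := by rw [hGbar j]
          _ = ∑ i, (lam i * G i j / w j) • p i := by
              rw [Finset.smul_sum]
              refine Finset.sum_congr rfl fun i _ => ?_
              rw [smul_smul]; congr 1; field_simp
      rw [hq]
      apply (convex_convexHull ℝ _).sum_mem
      · intro i _
        exact div_nonneg (mul_nonneg (hlam i).le (hG0 i j)) (hw j).le
      · rw [← Finset.sum_div, hGcol j, div_self hwj]
      · intro i _
        exact subset_convexHull ℝ _ ⟨i, rfl⟩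
    · calc ∑ j, w j • q j = ∑ j, ∑ i, (lam i * G i j) • p i := by
            refine Finset.sum_congr rfl fun j _ => (hGbar j).symm
        _ = ∑ i, ∑ j, (lam i * G i j) • p i := Finset.sum_comm
        _ = ∑ i, lam i • p i := by
            refine Finset.sum_congr rfl fun i _ => ?_
            rw [← Finset.sum_smul, ← Finset.mul_sum, hGrow i, mul_one]
  · rintro ⟨hhull, hbar⟩
    have h := fun j => extract_coeffs p (hhull j)
    choose a ha0 ha1 haq using h
    have key : ∀ i, ∑ j, w j * a j i = lam i := by
      have h1 : ∑ i, (∑ j, w j * a j i) • p i = ∑ j, w j • q j := by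
        simp_rw [Finset.sum_smul]
        rw [Finset.sum_comm]
        refine Finset.sum_congr rfl fun j _ => ?_
        rw [← haq j, Finset.smul_sum]
        exact Finset.sum_congr rfl fun i _ => (smul_smul _ _ _).symm
      have hc : (fun i => (∑ j, w j * a j i) - lam i) = 0 := by
        apply haff
        · simp_rw [sub_smul]
          rw [Finset.sum_sub_distrib, h1, hbar, sub_self]
        · rw [Finset.sum_sub_distrib, hlam1, Finset.sum_comm]
          simp_rw [← Finset.mul_sum]
          simp_rw [ha1, mul_one]
          rw [hw1, sub_self]
      intro i
      have := congrFun hc i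
      simpa [sub_eq_zero] using this
    refine ⟨fun i j => w j * a j i / lam i, ?_, ?_, ?_, ?_⟩
    · intro i j
      exact div_nonneg (mul_nonneg (hw j).le (ha0 j i)) (hlam i).le
    · intro i
      rw [← Finset.sum_div, key i, div_self (hlam i).ne']
    · intro j
      have : ∀ i, lam i * (w j * a j i / lam i) = w j * a j i := by
        intro i; rw [mul_comm, div_mul_cancel₀ _ (hlam i).ne']
      rw [Finset.sum_congr rfl fun i _ => this i, ← Finset.mul_sum, ha1 j, mul_one]
    · intro j
      have : ∀ i, (lam i * (w j * a j i / lam i)) • p i = (w j * a j i) • p i := by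
        intro i; congr 1; rw [mul_comm, div_mul_cancel₀ _ (hlam i).ne']
      rw [Finset.sum_congr rfl fun i _ => this i]
      rw [← haq j, Finset.smul_sum]
      refine Finset.sum_congr rfl fun i _ => ?_
      rw [smul_smul]
end

section
/- Let Ω be a finite set and let P = (λ, p) and Q = (μ, q) be finitely supported distributions whose support points lie in the probability simplex ΔΩ, with all weights positive, and whose barycenters B(P) = Σ_i λ_i p_i and B(Q) = Σ_j μ_j q_j have full support on Ω. Then Q is a simple mean-preserving contraction of P if and only if B(P) = B(Q) and the Blackwell experiment ℰ(Q) is a garbling of the Blackwell experiment ℰ(P). -/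
/-- For finitely supported distributions `P = (lam, p)` and `Q = (w, q)` with support in the
probability simplex over a finite set `Ω` and barycenters of full support, `Q` is a simple
mean-preserving contraction of `P` iff the barycenters coincide and the Blackwell experiment
`ℰ(Q)(j | ω) = w j * q j ω / B(Q) ω` is a garbling of `ℰ(P)(i | ω) = lam i * p i ω / B(P) ω`. -/
theorem smpc_iff_barycenter_eq_and_garbling
    {Ω : Type*} [Fintype Ω] (n m : ℕ)
    (lam : Fin n → ℝ) (p : Fin n → (Ω → ℝ))
    (hp : ∀ i, p i ∈ stdSimplex ℝ Ω)
    (hlam : ∀ i, 0 < lam i) (hlam1 : ∑ i, lam i = 1)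
    (w : Fin m → ℝ) (q : Fin m → (Ω → ℝ))
    (hq : ∀ j, q j ∈ stdSimplex ℝ Ω)
    (hw : ∀ j, 0 < w j) (hw1 : ∑ j, w j = 1)
    (hBP : ∀ ω, 0 < ∑ i, lam i * p i ω)
    (hBQ : ∀ ω, 0 < ∑ j, w j * q j ω) :
    (∃ G : Fin n → Fin m → ℝ,
        (∀ i j, 0 ≤ G i j) ∧ (∀ i, ∑ j, G i j = 1) ∧
        (∀ j, ∑ i, lam i * G i j = w j) ∧
        (∀ j, ∑ i, (lam i * G i j) • p i = w j • q j))
    ↔ ((∑ i, lam i • p i) = (∑ j, w j • q j) ∧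
        ∃ G : Fin n → Fin m → ℝ,
          (∀ i j, 0 ≤ G i j) ∧ (∀ i, ∑ j, G i j = 1) ∧
          (∀ ω j, w j * q j ω / (∑ j', w j' * q j' ω) =
            ∑ i, (lam i * p i ω / (∑ i', lam i' * p i' ω)) * G i j)) := by
  constructor
  · rintro ⟨G, h0, h1, h2, h3⟩
    have h3' : ∀ j ω, ∑ i, (lam i * G i j) * p i ω = w j * q j ω := by
      intro j ω
      have := congrFun (h3 j) ω
      simpa [Finset.sum_apply, Pi.smul_apply, smul_eq_mul] using this
    have hbar : (∑ i, lam i • p i) = (∑ j, w j • q j) := by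
      funext ω
      simp only [Finset.sum_apply, Pi.smul_apply, smul_eq_mul]
      calc ∑ i, lam i * p i ω = ∑ i, ∑ j, (lam i * G i j) * p i ω := by
            refine Finset.sum_congr rfl fun i _ => ?_
            rw [← Finset.sum_mul, ← Finset.mul_sum, h1 i, mul_one]
        _ = ∑ j, ∑ i, (lam i * G i j) * p i ω := Finset.sum_comm
        _ = ∑ j, w j * q j ω := Finset.sum_congr rfl fun j _ => h3' j _
    refine ⟨hbar, G, h0, h1, fun ω j => ?_⟩
    have hB : (∑ i', lam i' * p i' ω) = ∑ j', w j' * q j' ω := by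
      have := congrFun hbar ω
      simpa [Finset.sum_apply, Pi.smul_apply, smul_eq_mul] using this
    rw [← hB]
    rw [Finset.sum_congr rfl (fun i _ => div_mul_eq_mul_div (lam i * p i ω) _ (G i j)),
      ← Finset.sum_div]
    rw [show (∑ i, lam i * p i ω * G i j) = w j * q j ω by
      rw [← h3' j ω]; exact Finset.sum_congr rfl fun i _ => by ring]
  · rintro ⟨hbar, G, h0, h1, h3⟩
    have hB : ∀ ω, (∑ i', lam i' * p i' ω) = ∑ j', w j' * q j' ω := by
      intro ω
      have := congrFun hbar ω
      simpa [Finset.sum_apply, Pi.smul_apply, smul_eq_mul] using this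
    have h3' : ∀ j ω, ∑ i, (lam i * G i j) * p i ω = w j * q j ω := by
      intro j ω
      have := h3 ω j
      rw [Finset.sum_congr rfl (fun i _ => div_mul_eq_mul_div (lam i * p i ω) _ (G i j)),
        ← Finset.sum_div, ← hB ω] at this
      have hpos := (hBP ω).ne'
      field_simp at this
      rw [this]
      exact Finset.sum_congr rfl fun i _ => by ring
    refine ⟨G, h0, h1, fun j => ?_, fun j => ?_⟩
    · have := Finset.sum_congr rfl fun ω (_ : ω ∈ Finset.univ) => h3' j ω
      rw [Finset.sum_comm] at this
      calc ∑ i, lam i * G i j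
          = ∑ i, ∑ ω, (lam i * G i j) * p i ω := by
            refine Finset.sum_congr rfl fun i _ => ?_
            rw [← Finset.mul_sum, (hp i).2, mul_one]
        _ = ∑ ω, w j * q j ω := this
        _ = w j := by rw [← Finset.mul_sum, (hq j).2, mul_one]
    · funext ω
      simpa [Finset.sum_apply, Pi.smul_apply, smul_eq_mul] using h3' j ω
end

section
/- Suppose the support points p_1, …, p_n of P = (λ, p) are affinely independent and û : ℝ^d → ℝ is bounded. Then the persuasion value sup_Q Σ_j μ_j û(q_j), where the supremum ranges over all finitely supported simple mean-preserving contractions Q = (μ, q) of P, equals the concave envelope of û restricted to C = convexHull{p_1, …, p_n} evaluated at the barycenter B(P); concretely, it equals sup{ Σ_{k=1}^K β_k û(x_k) : K ∈ ℕ, β_k ≥ 0, Σ_k β_k = 1, x_k ∈ C, Σ_k β_k x_k = B(P) }. -/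
/-- Summing over the nonzero-weight indices (reindexed by `Fin`) equals summing over all
indices, provided the summand vanishes where the weight vanishes. -/
private lemma sum_nonzero_reindex {K : ℕ} (β : Fin K → ℝ) {M : Type*} [AddCommMonoid M]
    (f : Fin K → M) (hf : ∀ k, β k = 0 → f k = 0) :
    ∑ j : Fin (Fintype.card {k : Fin K // β k ≠ 0}),
      f ((Fintype.equivFin {k : Fin K // β k ≠ 0}).symm j).1 = ∑ k, f k := by
  rw [Fintype.sum_equiv ((Fintype.equivFin {k : Fin K // β k ≠ 0}).symm)
    _ (fun s => f s.1) (fun j => rfl)]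
  rw [← Finset.sum_subtype (Finset.univ.filter fun k => β k ≠ 0) (by simp) f]
  exact Finset.sum_filter_of_ne (fun k _ h => fun h0 => h (hf k h0))

/-- A point of the convex hull of the range of a finite family is a convex combination. -/
private lemma exists_convex_rep {d n : ℕ} (p : Fin n → (Fin d → ℝ)) (y : Fin d → ℝ)
    (hy : y ∈ convexHull ℝ (Set.range p)) :
    ∃ a : Fin n → ℝ, (∀ i, 0 ≤ a i) ∧ (∑ i, a i = 1) ∧ ∑ i, a i • p i = y := by
  rw [convexHull_range_eq_exists_affineCombination] at hy
  obtain ⟨s, w, hw0, hw1, hws⟩ := hy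
  refine ⟨fun i => if i ∈ s then w i else 0,
    fun i => by by_cases h : i ∈ s <;> simp [h, hw0 i], ?_, ?_⟩
  · rw [Finset.sum_ite_mem, Finset.univ_inter, hw1]
  · rw [← hws, Finset.affineCombination_eq_linear_combination s p w hw1]
    simp only [ite_smul, zero_smul]
    rw [Finset.sum_ite_mem, Finset.univ_inter]

/-- Concavification of the persuasion problem when the support of the prior is affinely
independent: the supremum of `∑ j, w j * u (q j)` over all finitely supported simple
mean-preserving contractions `Q = (w, q)` of `P = (lam, p)` equals the concave envelope of
`u` restricted to `convexHull {p_1, …, p_n}` evaluated at the barycenter of `P`. -/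
theorem persuasion_value_eq_concavification_of_affineIndependent
    (d n : ℕ)
    (lam : Fin n → ℝ) (p : Fin n → (Fin d → ℝ))
    (hlam : ∀ i, 0 < lam i) (hlam1 : ∑ i, lam i = 1)
    (haff : ∀ c : Fin n → ℝ, ∑ i, c i • p i = 0 → ∑ i, c i = 0 → c = 0)
    (u : (Fin d → ℝ) → ℝ) (M : ℝ) (hu : ∀ x, |u x| ≤ M) :
    sSup { r : ℝ | ∃ (m : ℕ) (w : Fin m → ℝ) (q : Fin m → (Fin d → ℝ))
        (G : Fin n → Fin m → ℝ),
        (∀ j, 0 < w j) ∧ (∑ j, w j = 1) ∧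
        (∀ i j, 0 ≤ G i j) ∧ (∀ i, ∑ j, G i j = 1) ∧
        (∀ j, ∑ i, lam i * G i j = w j) ∧
        (∀ j, ∑ i, (lam i * G i j) • p i = w j • q j) ∧
        r = ∑ j, w j * u (q j) }
    = sSup { r : ℝ | ∃ (K : ℕ) (β : Fin K → ℝ) (x : Fin K → (Fin d → ℝ)),
        (∀ k, 0 ≤ β k) ∧ (∑ k, β k = 1) ∧
        (∀ k, x k ∈ convexHull ℝ (Set.range p)) ∧
        (∑ k, β k • x k = ∑ i, lam i • p i) ∧
        r = ∑ k, β k * u (x k) } := by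
  congr 1
  ext r
  constructor
  · -- LHS ⊆ RHS : any smpc is a convex decomposition of the barycenter
    rintro ⟨m, w, q, G, hw, hw1, hG0, hGrow, hGcol, hGmean, rfl⟩
    refine ⟨m, w, q, fun j => (hw j).le, hw1, ?_, ?_, rfl⟩
    · intro j
      rw [convexHull_range_eq_exists_affineCombination]
      refine ⟨Finset.univ, fun i => lam i * G i j / w j, fun i _ => div_nonneg (mul_nonneg (hlam i).le (hG0 i j)) (hw j).le, ?_, ?_⟩
      · rw [← Finset.sum_div, hGcol j, div_self (hw j).ne']
      · have hs1 : ∑ i, lam i * G i j / w j = 1 := by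
          rw [← Finset.sum_div, hGcol j, div_self (hw j).ne']
        rw [Finset.affineCombination_eq_linear_combination _ p _ hs1]
        have : ∑ i, (lam i * G i j / w j) • p i = (w j)⁻¹ • ∑ i, (lam i * G i j) • p i := by
          rw [Finset.smul_sum]
          exact Finset.sum_congr rfl fun i _ => by
            rw [div_eq_inv_mul, mul_smul]
        rw [this, hGmean j, inv_smul_smul₀ (hw j).ne']
    · -- barycenter is preserved
      have : ∑ j, w j • q j = ∑ j, ∑ i, (lam i * G i j) • p i :=
        Finset.sum_congr rfl fun j _ => (hGmean j).symm
      rw [this, Finset.sum_comm]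
      exact Finset.sum_congr rfl fun i _ => by
        rw [← Finset.sum_smul, ← Finset.mul_sum, hGrow i, mul_one]
  · -- RHS ⊆ LHS : use affine independence to build the garbling `G`
    rintro ⟨K, β, x, hβ0, hβ1, hxC, hbar, rfl⟩
    choose a ha0 ha1 hax using fun k => exists_convex_rep p (x k) (hxC k)
    -- the key identity from affine independence
    have hlamrep : ∀ i, ∑ k, β k * a k i = lam i := by
      set c : Fin n → ℝ := fun i => lam i - ∑ k, β k * a k i with hc
      have h1 : ∑ i, c i • p i = 0 := by
        simp only [hc, sub_smul, Finset.sum_sub_distrib, Finset.sum_smul]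
        rw [← hbar, sub_eq_zero]
        rw [Finset.sum_comm]
        exact Finset.sum_congr rfl fun k _ => by
          rw [← hax k, Finset.smul_sum]
          exact Finset.sum_congr rfl fun i _ => by rw [mul_smul]
      have h2 : ∑ i, c i = 0 := by
        simp only [hc, Finset.sum_sub_distrib, hlam1, sub_eq_zero]
        rw [Finset.sum_comm]
        have : ∀ k, ∑ i, β k * a k i = β k := fun k => by
          rw [← Finset.mul_sum, ha1 k, mul_one]
        rw [Finset.sum_congr rfl fun k _ => this k, hβ1]
      have := haff c h1 h2
      intro i
      have := congrFun this i
      simp only [hc, Pi.zero_apply, sub_eq_zero] at this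
      exact this.symm
    -- reindex the nonzero weights
    set S := {k : Fin K // β k ≠ 0}
    set e : Fin (Fintype.card S) ≃ S := (Fintype.equivFin S).symm with he
    refine ⟨Fintype.card S, fun j => β (e j).1, fun j => x (e j).1,
      fun i j => β (e j).1 * a (e j).1 i / lam i, ?_, ?_, ?_, ?_, ?_, ?_, ?_⟩
    · exact fun j => lt_of_le_of_ne (hβ0 _) (Ne.symm (e j).2)
    · rw [sum_nonzero_reindex β β (fun k h => h), hβ1]
    · exact fun i j => div_nonneg (mul_nonneg (hβ0 _) (ha0 _ _)) (hlam i).le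
    · intro i
      rw [sum_nonzero_reindex β (fun k => β k * a k i / lam i)
        (fun k h => by simp [h]), ← Finset.sum_div, hlamrep i,
        div_self (hlam i).ne']
    · intro j
      have : ∀ i, lam i * (β (e j).1 * a (e j).1 i / lam i) = β (e j).1 * a (e j).1 i :=
        fun i => by rw [mul_comm, div_mul_cancel₀ _ (hlam i).ne']
      rw [Finset.sum_congr rfl fun i _ => this i, ← Finset.mul_sum, ha1, mul_one]
    · intro j
      have : ∀ i, lam i * (β (e j).1 * a (e j).1 i / lam i) = β (e j).1 * a (e j).1 i :=
        fun i => by rw [mul_comm, div_mul_cancel₀ _ (hlam i).ne']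
      rw [Finset.sum_congr rfl fun i _ => by rw [this i, mul_smul], ← Finset.smul_sum, hax]
    · rw [sum_nonzero_reindex β (fun k => β k * u (x k)) (fun k h => by simp [h])]
end

section
/- Let Ω be a finite set and let P be a finitely supported distribution whose support is exactly the set of point masses {δ_ω : ω ∈ Ω} ⊆ ΔΩ with positive weights (the perfectly informed sender), and let û : ΔΩ → ℝ be bounded. Then the supremum, over all finitely supported simple mean-preserving contractions Q = (μ, q) of P, of Σ_j μ_j û(q_j) equals sup{ Σ_{k=1}^K β_k û(x_k) : K ∈ ℕ, β_k ≥ 0, Σ_k β_k = 1, x_k ∈ ΔΩ, Σ_k β_k x_k = B(P) }, i.e. the concave envelope of û over the whole simplex evaluated at the barycenter B(P) (the standard Bayesian-persuasion concavification value). -/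
/-- Summing over the positive-weight indices (reindexed by `Fin`) recovers the full sum
whenever terms with non-positive weight vanish. -/
lemma sum_pos_part_eq {K : ℕ} {V : Type*} [AddCommMonoid V] (β : Fin K → ℝ)
    [DecidablePred fun k : Fin K => 0 < β k]
    (f : Fin K → V) (hf : ∀ k, ¬ 0 < β k → f k = 0) :
    ∑ j : Fin (Finset.univ.filter (fun k : Fin K => 0 < β k)).card,
      f (((Finset.univ.filter (fun k : Fin K => 0 < β k)).equivFin.symm j : Fin K))
      = ∑ k, f k := by
  set S := Finset.univ.filter (fun k : Fin K => 0 < β k) with hS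
  have h1 : ∑ j : Fin S.card, f ((S.equivFin.symm j : Fin K))
      = ∑ s : {x // x ∈ S}, f (s : Fin K) := by
    exact Fintype.sum_equiv S.equivFin.symm _ _ (fun j => rfl)
  rw [h1]
  rw [Finset.sum_coe_sort S (fun k => f k)]
  refine Finset.sum_subset (Finset.subset_univ S) ?_
  intro k _ hk
  apply hf
  intro h
  exact hk (by simp [hS, h])

/-- Bayesian-persuasion concavification for a perfectly informed sender: when the support of
the prior `P` is exactly the set of point masses `{δ_ω : ω ∈ Ω}` with positive weights, the
supremum of `∑ j, w j * u (q j)` over all finitely supported simple mean-preserving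
contractions `Q = (w, q)` of `P` equals the concave envelope of `u` over the whole simplex
evaluated at the barycenter of `P`. -/
theorem persuasion_value_eq_concavification_of_perfectly_informed
    {Ω : Type*} [Fintype Ω] [DecidableEq Ω]
    (lam : Ω → ℝ) (hlam : ∀ ω, 0 < lam ω) (hlam1 : ∑ ω, lam ω = 1)
    (u : (Ω → ℝ) → ℝ) (M : ℝ) (hu : ∀ x ∈ stdSimplex ℝ Ω, |u x| ≤ M) :
    sSup { r : ℝ | ∃ (m : ℕ) (w : Fin m → ℝ) (q : Fin m → (Ω → ℝ))
        (G : Ω → Fin m → ℝ),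
        (∀ j, 0 < w j) ∧ (∑ j, w j = 1) ∧ (∀ j, q j ∈ stdSimplex ℝ Ω) ∧
        (∀ ω j, 0 ≤ G ω j) ∧ (∀ ω, ∑ j, G ω j = 1) ∧
        (∀ j, ∑ ω, lam ω * G ω j = w j) ∧
        (∀ j, ∑ ω, (lam ω * G ω j) • ((fun a => if a = ω then (1:ℝ) else 0) : Ω → ℝ)
            = w j • q j) ∧
        r = ∑ j, w j * u (q j) }
    = sSup { r : ℝ | ∃ (K : ℕ) (β : Fin K → ℝ) (x : Fin K → (Ω → ℝ)),
        (∀ k, 0 ≤ β k) ∧ (∑ k, β k = 1) ∧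
        (∀ k, x k ∈ stdSimplex ℝ Ω) ∧
        (∑ k, β k • x k = ∑ ω, lam ω • ((fun a => if a = ω then (1:ℝ) else 0) : Ω → ℝ)) ∧
        r = ∑ k, β k * u (x k) } := by
  classical
  have hBa : ∀ a : Ω,
      (∑ ω, lam ω • ((fun b => if b = ω then (1:ℝ) else 0) : Ω → ℝ)) a = lam a := by
    intro a
    simp only [Finset.sum_apply, Pi.smul_apply, smul_eq_mul, mul_ite, mul_one, mul_zero]
    simp
  congr 1
  ext r
  constructor
  · rintro ⟨m, w, q, G, hw, hw1, hq, hG0, hG1, hGw, hGq, hr⟩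
    refine ⟨m, w, q, fun j => le_of_lt (hw j), hw1, hq, ?_, hr⟩
    have : ∑ j, w j • q j
        = ∑ j, ∑ ω, (lam ω * G ω j) • ((fun a => if a = ω then (1:ℝ) else 0) : Ω → ℝ) := by
      exact Finset.sum_congr rfl fun j _ => (hGq j).symm
    rw [this, Finset.sum_comm]
    refine Finset.sum_congr rfl fun ω _ => ?_
    rw [← Finset.sum_smul]
    congr 1
    rw [← Finset.mul_sum, hG1 ω, mul_one]
  · rintro ⟨K, β, x, hβ0, hβ1, hx, hbar, hr⟩
    set S := Finset.univ.filter (fun k : Fin K => 0 < β k) with hS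
    set e := S.equivFin.symm with he
    refine ⟨S.card, fun j => β (e j), fun j => x (e j),
      fun ω j => β (e j) * (x (e j)) ω / lam ω, ?_, ?_, ?_, ?_, ?_, ?_, ?_, ?_⟩
    · intro j
      have h := (e j).2
      simpa using (Finset.mem_filter.mp h).2
    · have h := sum_pos_part_eq β (fun k => β k)
        (fun k hk => le_antisymm (not_lt.mp hk) (hβ0 k))
      simpa [hβ1] using h
    · intro j; exact hx _
    · intro ω j
      have h1 : (0:ℝ) ≤ β (e j) := hβ0 _
      have h2 : (0:ℝ) ≤ (x (e j)) ω := (hx _).1 ω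
      exact div_nonneg (mul_nonneg h1 h2) (hlam ω).le
    · intro ω
      have hsum : ∑ j : Fin S.card, β (e j) * (x (e j)) ω
          = ∑ k, β k * (x k) ω := by
        refine sum_pos_part_eq β (fun k => β k * (x k) ω) ?_
        intro k hk
        have : β k = 0 := le_antisymm (not_lt.mp hk) (hβ0 k)
        simp [this]
      have hbar' : ∑ k, β k * (x k) ω = lam ω := by
        have := congrFun hbar ω
        rw [hBa ω] at this
        simpa [Finset.sum_apply, Pi.smul_apply] using this
      rw [← Finset.sum_div, hsum, hbar', div_self (hlam ω).ne']
    · intro j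
      have : ∀ ω, lam ω * (β (e j) * (x (e j)) ω / lam ω) = β (e j) * (x (e j)) ω := by
        intro ω
        rw [← mul_div_assoc, mul_div_cancel_left₀ _ (hlam ω).ne']
      simp only [this]
      rw [← Finset.mul_sum, (hx (e j)).2, mul_one]
    · intro j
      funext a
      have hterm : ∀ ω, lam ω * (β (e j) * (x (e j)) ω / lam ω) = β (e j) * (x (e j)) ω := by
        intro ω
        rw [← mul_div_assoc, mul_div_cancel_left₀ _ (hlam ω).ne']
      simp only [Finset.sum_apply, Pi.smul_apply, smul_eq_mul, hterm]
      rw [Finset.sum_congr rfl (fun ω _ => by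
        rw [show (if a = ω then (1:ℝ) else 0) = if a = ω then 1 else 0 from rfl])]
      simp [mul_ite]
    · rw [hr]
      symm
      refine sum_pos_part_eq β (fun k => β k * u (x k)) ?_
      intro k hk
      have : β k = 0 := le_antisymm (not_lt.mp hk) (hβ0 k)
      simp [this]
end

section
/- Let F ⊆ ΔΩ be finite, let f : ℕ → F and ω : ℕ → Ω be arbitrary sequences, and suppose the receiver plays a_t = â(f_t) at every period. If the play is calibrated, i.e. limsup_{T→∞} K_T ≤ 0, then the receiver has no regret with respect to every forecast f ∈ F: limsup_{T→∞} (|N_T[f]|/T) · ( max_{a* ∈ A} u_R(ω̄_T[f], a*) − (1/|N_T[f]|) Σ_{t ∈ N_T[f]} u_R(ω_t, a_t) ) ≤ 0 (the term being 0 at horizons where N_T[f] is empty). -/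
/-! Writing `v_a = (u_R(ω, a))_ω`, on the periods in `N_T[q]` the receiver plays `â(q)`, so the
regret for `q` is `(|N_T[q]|/T) · (max_a ⟪ω̄_T[q], v_a⟫ - ⟪ω̄_T[q], v_{â(q)}⟫)`. As `â(q)` is optimal
against `q`, Cauchy–Schwarz bounds the bracket by `2 max_a ‖v_a‖ · ‖ω̄_T[q] - q‖`. Hence the regret
lies between `0` and a constant multiple of the calibration score `K_T`, which tends to `0`. -/

open Filter

noncomputable section

variable {Ω : Type*} [Fintype Ω] [DecidableEq Ω]

/-- The Dirac point mass `δ_ω` as an element of the probability simplex in `ℝ^Ω`. -/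
def diracVec (ω : Ω) : EuclideanSpace ℝ Ω := WithLp.toLp 2 (fun a => if a = ω then (1 : ℝ) else 0)

/-- Membership in the probability simplex `ΔΩ`. -/
def memSimplex (q : EuclideanSpace ℝ Ω) : Prop := (∀ a, 0 ≤ q a) ∧ ∑ a, q a = 1

open Classical in
/-- The set of periods `t < T` at which the forecast sequence `f` announced the value `q`. -/
def forecastTimes (f : ℕ → EuclideanSpace ℝ Ω) (q : EuclideanSpace ℝ Ω) (T : ℕ) :
    Finset ℕ := (Finset.range T).filter fun t => f t = q

/-- The empirical distribution of states over the periods `t < T` where the forecast was `q`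
(junk value when that set of periods is empty). -/
def empDist (f : ℕ → EuclideanSpace ℝ Ω) (X : ℕ → Ω) (q : EuclideanSpace ℝ Ω) (T : ℕ) :
    EuclideanSpace ℝ Ω :=
  ((forecastTimes f q T).card : ℝ)⁻¹ • ∑ t ∈ forecastTimes f q T, diracVec (X t)

open scoped RealInnerProductSpace Topology

theorem sum_mul_eq_inner {ι : Type*} [Fintype ι] (x : EuclideanSpace ℝ ι) (u : ι → ℝ) :
    ∑ i, x i * u i = ⟪x, WithLp.toLp 2 u⟫ := by
  simp [PiLp.inner_apply, mul_comm]

theorem tendsto_of_limsup_le_of_forall_le {α β : Type*} [ConditionallyCompleteLinearOrder α]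
    [TopologicalSpace α] [OrderTopology α] {l : Filter β} {u : β → α} {a : α}
    (hbdd : IsBoundedUnder (· ≤ ·) l u) (hle : ∀ n, a ≤ u n) (hlimsup : limsup u l ≤ a) :
    Tendsto u l (𝓝 a) :=
  tendsto_order.2 ⟨fun _ hb => Eventually.of_forall fun n => hb.trans_le (hle n),
    fun _ hb => eventually_lt_of_limsup_lt (hlimsup.trans_lt hb) hbdd⟩

theorem ciSup_inner_sub_inner_le {E A : Type*} [NormedAddCommGroup E] [InnerProductSpace ℝ E]
    {u : A → E} {M : ℝ} (hM : ∀ a, ‖u a‖ ≤ M) {p q : E} {b : A}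
    (hb : ∀ a, ⟪q, u a⟫ ≤ ⟪q, u b⟫) :
    (⨆ a, ⟪p, u a⟫) - ⟪p, u b⟫ ≤ 2 * M * ‖p - q‖ := by
  have : Nonempty A := ⟨b⟩
  have hlip : ∀ a, |⟪p - q, u a⟫| ≤ M * ‖p - q‖ := fun a =>
    (abs_real_inner_le_norm _ _).trans (by rw [mul_comm]; gcongr; exact hM a)
  rw [sub_le_iff_le_add]
  refine ciSup_le fun a => ?_
  have h₁ := abs_le.1 (hlip a)
  have h₂ := abs_le.1 (hlip b)
  simp only [inner_sub_left] at h₁ h₂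
  linarith [hb a]

section Empirical

variable (f : ℕ → EuclideanSpace ℝ Ω) (X : ℕ → Ω) (q : EuclideanSpace ℝ Ω) (T : ℕ)

theorem diracVec_eq_single {ι : Type*} [DecidableEq ι] (i : ι) :
    diracVec i = EuclideanSpace.single i (1 : ℝ) := by
  ext a
  simp [diracVec, PiLp.single_apply]

theorem norm_empDist_le_one : ‖empDist f X q T‖ ≤ 1 := by
  rcases eq_or_ne (forecastTimes f q T).card 0 with h | h
  · simp [empDist, h]
  calc ‖empDist f X q T‖
      ≤ ((forecastTimes f q T).card : ℝ)⁻¹ * ∑ t ∈ forecastTimes f q T, ‖diracVec (X t)‖ := by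
        rw [empDist, norm_smul, Real.norm_of_nonneg (by positivity)]
        gcongr
        exact norm_sum_le _ _
    _ = 1 := by simp [diracVec_eq_single, h]

theorem inner_empDist (v : EuclideanSpace ℝ Ω) :
    ⟪empDist f X q T, v⟫ = ((forecastTimes f q T).card : ℝ)⁻¹ *
      ∑ t ∈ forecastTimes f q T, v (X t) := by
  simp [empDist, inner_smul_left, sum_inner, diracVec_eq_single, EuclideanSpace.inner_single_left]

end Empirical

def calibrationScore (F : Finset (EuclideanSpace ℝ Ω)) (f : ℕ → EuclideanSpace ℝ Ω)
    (X : ℕ → Ω) (T : ℕ) : ℝ :=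
  ∑ q ∈ F, ((forecastTimes f q T).card : ℝ) / T * ‖empDist f X q T - q‖

def forecastRegret {A : Type*} (uR : Ω → A → ℝ) (ahat : EuclideanSpace ℝ Ω → A)
    (f : ℕ → EuclideanSpace ℝ Ω) (X : ℕ → Ω) (q : EuclideanSpace ℝ Ω) (T : ℕ) : ℝ :=
  if (forecastTimes f q T).card = 0 then 0 else
    ((forecastTimes f q T).card : ℝ) / T *
      ((⨆ a : A, ∑ ω, (empDist f X q T) ω * uR ω a) -
        ((forecastTimes f q T).card : ℝ)⁻¹ *
          ∑ t ∈ forecastTimes f q T, uR (X t) (ahat (f t)))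

def utilityVec {A : Type*} (uR : Ω → A → ℝ) (a : A) : EuclideanSpace ℝ Ω :=
  WithLp.toLp 2 fun ω => uR ω a

section Calibration

variable (F : Finset (EuclideanSpace ℝ Ω)) (f : ℕ → EuclideanSpace ℝ Ω) (X : ℕ → Ω) (T : ℕ)

theorem calibrationScore_nonneg : 0 ≤ calibrationScore F f X T :=
  Finset.sum_nonneg fun _ _ => by positivity

theorem calibrationScore_le : calibrationScore F f X T ≤ ∑ p ∈ F, (1 + ‖p‖) := by
  refine Finset.sum_le_sum fun p _ => ?_
  have hfrac : ((forecastTimes f p T).card : ℝ) / T ≤ 1 :=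
    div_le_one_of_le₀ (mod_cast (Finset.card_filter_le _ _).trans_eq (Finset.card_range T))
      (by positivity)
  calc ((forecastTimes f p T).card : ℝ) / T * ‖empDist f X p T - p‖
      ≤ 1 * (‖empDist f X p T‖ + ‖p‖) :=
        mul_le_mul hfrac (norm_sub_le _ _) (norm_nonneg _) zero_le_one
    _ ≤ 1 + ‖p‖ := by linarith [norm_empDist_le_one f X p T]

end Calibration

section Regret

variable {A : Type*} (uR : Ω → A → ℝ) (ahat : EuclideanSpace ℝ Ω → A)
  (f : ℕ → EuclideanSpace ℝ Ω) (X : ℕ → Ω) (q : EuclideanSpace ℝ Ω) (T : ℕ)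

theorem forecastRegret_eq : forecastRegret uR ahat f X q T =
    (forecastTimes f q T).card / T * ((⨆ a, ⟪empDist f X q T, utilityVec uR a⟫) -
      ⟪empDist f X q T, utilityVec uR (ahat q)⟫) := by
  rw [forecastRegret]
  split_ifs with h
  · simp [h]
  · congr 2
    · simp only [sum_mul_eq_inner, utilityVec]
    · rw [inner_empDist]
      congr 1
      refine Finset.sum_congr rfl fun t ht => ?_
      rw [(Finset.mem_filter.1 ht).2]
      rfl

theorem forecastRegret_nonneg [Finite A] : 0 ≤ forecastRegret uR ahat f X q T := by
  rw [forecastRegret_eq]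
  refine mul_nonneg (by positivity) (sub_nonneg.2 ?_)
  exact le_ciSup (Finite.bddAbove_range fun a => ⟪empDist f X q T, utilityVec uR a⟫) (ahat q)

theorem forecastRegret_le_calibrationScore {F : Finset (EuclideanSpace ℝ Ω)} (hqF : q ∈ F)
    (hbest : ∀ a, ∑ ω, q ω * uR ω a ≤ ∑ ω, q ω * uR ω (ahat q)) {M : ℝ}
    (hM : ∀ a, ‖utilityVec uR a‖ ≤ M) :
    forecastRegret uR ahat f X q T ≤ 2 * M * calibrationScore F f X T := by
  simp only [sum_mul_eq_inner] at hbest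
  have hM₀ : 0 ≤ M := (norm_nonneg _).trans (hM (ahat q))
  rw [forecastRegret_eq]
  calc _ ≤ ((forecastTimes f q T).card : ℝ) / T * (2 * M * ‖empDist f X q T - q‖) := by
        gcongr
        exact ciSup_inner_sub_inner_le hM hbest
    _ = 2 * M * (((forecastTimes f q T).card : ℝ) / T * ‖empDist f X q T - q‖) := by ring
    _ ≤ 2 * M * calibrationScore F f X T := by
        gcongr
        exact Finset.single_le_sum (f := fun p => ((forecastTimes f p T).card : ℝ) / T *
          ‖empDist f X p T - p‖) (fun _ _ => by positivity) hqF

end Regret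

open Classical in
theorem noRegret_of_calibrated_general
    {A : Type*} [Fintype A]
    (uR : Ω → A → ℝ)
    (ahat : EuclideanSpace ℝ Ω → A)
    (hahat : ∀ q : EuclideanSpace ℝ Ω, memSimplex q →
      ∀ a : A, ∑ ω, q ω * uR ω a ≤ ∑ ω, q ω * uR ω (ahat q))
    (F : Finset (EuclideanSpace ℝ Ω)) (hF : ∀ q ∈ F, memSimplex q)
    (f : ℕ → EuclideanSpace ℝ Ω)
    (X : ℕ → Ω)
    (hcal : limsup (fun T : ℕ => ∑ q ∈ F,
        ((forecastTimes f q T).card : ℝ) / T * ‖empDist f X q T - q‖) atTop ≤ 0) :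
    ∀ q ∈ F,
      limsup (fun T : ℕ =>
        if (forecastTimes f q T).card = 0 then 0 else
          ((forecastTimes f q T).card : ℝ) / T *
            ((⨆ a : A, ∑ ω, (empDist f X q T) ω * uR ω a) -
              ((forecastTimes f q T).card : ℝ)⁻¹ *
                ∑ t ∈ forecastTimes f q T, uR (X t) (ahat (f t)))) atTop ≤ 0 := by
  intro q hq
  obtain ⟨M, hM⟩ := Finite.exists_le fun a => ‖utilityVec uR a‖
  -- `limsup` of a sequence unbounded above is a junk value, hence the need for an upper bound.
  have hcalibrated : Tendsto (calibrationScore F f X) atTop (𝓝 0) :=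
    tendsto_of_limsup_le_of_forall_le (isBoundedUnder_of ⟨_, calibrationScore_le F f X⟩)
      (calibrationScore_nonneg F f X) hcal
  have hregret : Tendsto (forecastRegret uR ahat f X q) atTop (𝓝 0) :=
    squeeze_zero (fun T => forecastRegret_nonneg uR ahat f X q T)
      (fun T => forecastRegret_le_calibrationScore uR ahat f X q T hq (hahat q (hF q hq)) hM)
      (by simpa using hcalibrated.const_mul (2 * M))
  exact hregret.limsup_eq.le

open Classical in
/-- If the receiver follows the recommendations `â(f_t)` of a calibrated play
(`limsup` of the calibration score is `≤ 0`), then he has no regret with respect to every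
forecast `q ∈ F`. -/
theorem noRegret_of_calibrated
    {A : Type*} [Fintype A] [Nonempty A]
    (uR : Ω → A → ℝ)
    (ahat : EuclideanSpace ℝ Ω → A)
    (hahat : ∀ q : EuclideanSpace ℝ Ω, memSimplex q →
      ∀ a : A, ∑ ω, q ω * uR ω a ≤ ∑ ω, q ω * uR ω (ahat q))
    (F : Finset (EuclideanSpace ℝ Ω)) (hF : ∀ q ∈ F, memSimplex q)
    (f : ℕ → EuclideanSpace ℝ Ω) (hf : ∀ t, f t ∈ F)
    (X : ℕ → Ω)
    (hcal : limsup (fun T : ℕ => ∑ q ∈ F,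
        ((forecastTimes f q T).card : ℝ) / T * ‖empDist f X q T - q‖) atTop ≤ 0) :
    ∀ q ∈ F,
      limsup (fun T : ℕ =>
        if (forecastTimes f q T).card = 0 then 0 else
          ((forecastTimes f q T).card : ℝ) / T *
            ((⨆ a : A, ∑ ω, (empDist f X q T) ω * uR ω a) -
              ((forecastTimes f q T).card : ℝ)⁻¹ *
                ∑ t ∈ forecastTimes f q T, uR (X t) (ahat (f t)))) atTop ≤ 0 :=
  noRegret_of_calibrated_general uR ahat hahat F hF f X hcal

end
end

section
/- Almost surely, for every forecast value f ∈ F, the averaged prediction errors vanish: (1/T) Σ_{t=1}^T 1{f_t = f} (δ_{X_t} − p_t) → 0 in ℝ^Ω as T → ∞. -/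
/-!
Fix a coordinate `a ∈ Ω` and a forecast value `q ∈ F`. Because `f_t` is known at time `t - 1`,
`Z_t = 1{f_t = q} (1{X_t = a} - p_t(a))` is a bounded martingale difference sequence. Its
increments are orthogonal in `L²`, so `M_n = Σ_{t<n} Z_t / (t + 1)` is a martingale with
`𝔼[M_n²] ≤ 4 Σ 1/(t + 1)²`, bounded in `L¹`, and it converges almost surely. Kronecker's lemma
turns convergence of `Σ Z_t / (t + 1)` into `(1/n) Σ_{t<n} Z_t → 0`. There are only finitely
many pairs `(a, q)`, and convergence in `ℝ^Ω` is coordinatewise.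
-/

open Filter MeasureTheory Finset
open scoped Topology

noncomputable section

theorem kronecker_tendsto_inv_mul_sum {u : ℕ → ℝ} {L : ℝ}
    (h : Tendsto (fun n => ∑ t ∈ range n, ((t : ℝ) + 1)⁻¹ * u t) atTop (𝓝 L)) :
    Tendsto (fun n : ℕ => (n : ℝ)⁻¹ * ∑ t ∈ range n, u t) atTop (𝓝 0) := by
  set b : ℕ → ℝ := fun n => ∑ t ∈ range n, ((t : ℝ) + 1)⁻¹ * u t
  have abel : ∀ n, ∑ t ∈ range n, u t = n * b n - ∑ t ∈ range n, b t := by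
    intro n
    induction n with
    | zero => simp
    | succ n ih =>
      have hu : u n = ((n : ℝ) + 1) * (b (n + 1) - b n) := by
        simp only [b, sum_range_succ]
        field_simp
        ring
      rw [sum_range_succ, ih, sum_range_succ (f := b), hu]
      push_cast
      ring
  have hcesaro : Tendsto (fun n : ℕ => (n : ℝ)⁻¹ * ∑ t ∈ range n, b t) atTop (𝓝 L) := h.cesaro
  refine (sub_self L ▸ h.sub hcesaro).congr' ?_
  filter_upwards [eventually_ne_atTop 0] with n hn
  rw [abel, mul_sub, inv_mul_cancel_left₀ (Nat.cast_ne_zero.2 hn)]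

section MartingaleDifferences

variable {Ξ : Type*} {m0 : MeasurableSpace Ξ} {μ : Measure Ξ} [IsFiniteMeasure μ]
  {𝒢 : Filtration ℕ m0} {Z : ℕ → Ξ → ℝ}

theorem integral_mul_eq_zero_of_condExp_eq_zero {m : MeasurableSpace Ξ} (hm : m ≤ m0)
    {g Y : Ξ → ℝ} (hg : StronglyMeasurable[m] g) (hgY : Integrable (g * Y) μ)
    (hY : Integrable Y μ) (hY0 : μ[Y | m] =ᵐ[μ] 0) :
    ∫ ξ, g ξ * Y ξ ∂μ = 0 := by
  calc ∫ ξ, g ξ * Y ξ ∂μ = ∫ ξ, μ[g * Y | m] ξ ∂μ := (integral_condExp hm).symm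
    _ = ∫ ξ, (g * μ[Y | m]) ξ ∂μ :=
      integral_congr_ae (condExp_mul_of_stronglyMeasurable_left hg hgY hY)
    _ = ∫ _, (0 : ℝ) ∂μ := integral_congr_ae (hY0.mono fun ξ hξ => by simp [hξ])
    _ = 0 := integral_zero _ _

theorem martingale_sum_of_condExp_eq_zero
    (hZ : ∀ t, StronglyMeasurable[𝒢 (t + 1)] (Z t)) (hint : ∀ t, Integrable (Z t) μ)
    (hmd : ∀ t, μ[Z t | 𝒢 t] =ᵐ[μ] 0) :
    Martingale (fun n ξ => ∑ t ∈ range n, Z t ξ) 𝒢 μ := by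
  refine martingale_of_condExp_sub_eq_zero_nat
    (fun n => stronglyMeasurable_fun_sum _ fun t ht => (hZ t).mono (𝒢.mono (mem_range.1 ht)))
    (fun n => integrable_finsetSum _ fun t _ => hint t) fun n => ?_
  have hdiff :
      (fun ξ => ∑ t ∈ range (n + 1), Z t ξ) - (fun ξ => ∑ t ∈ range n, Z t ξ) = Z n := by
    ext ξ
    simp [sum_range_succ]
  rw [hdiff]
  exact hmd n

theorem integral_sq_sum_le_of_condExp_eq_zero {c : ℕ → ℝ}
    (hZ : ∀ t, StronglyMeasurable[𝒢 (t + 1)] (Z t)) (hbdd : ∀ t, ∀ᵐ ξ ∂μ, |Z t ξ| ≤ c t)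
    (hmd : ∀ t, μ[Z t | 𝒢 t] =ᵐ[μ] 0) (n : ℕ) :
    ∫ ξ, (∑ t ∈ range n, Z t ξ) ^ 2 ∂μ ≤ μ.real Set.univ * ∑ t ∈ range n, c t ^ 2 := by
  have hL2 : ∀ t, MemLp (Z t) 2 μ := fun t =>
    .of_bound ((hZ t).mono (𝒢.le _)).aestronglyMeasurable _ (hbdd t)
  induction n with
  | zero => simp
  | succ n ih =>
    set S : Ξ → ℝ := fun ξ => ∑ t ∈ range n, Z t ξ
    have hS : MemLp S 2 μ := memLp_finsetSum _ fun t _ => hL2 t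
    have horth : ∫ ξ, S ξ * Z n ξ ∂μ = 0 :=
      integral_mul_eq_zero_of_condExp_eq_zero (𝒢.le n)
        (stronglyMeasurable_fun_sum _ fun t ht => (hZ t).mono (𝒢.mono (mem_range.1 ht)))
        (hS.integrable_mul (hL2 n)) ((hL2 n).integrable one_le_two) (hmd n)
    have hZsq : ∫ ξ, Z n ξ ^ 2 ∂μ ≤ μ.real Set.univ * c n ^ 2 := by
      calc ∫ ξ, Z n ξ ^ 2 ∂μ ≤ ∫ _, c n ^ 2 ∂μ :=
            integral_mono_ae (hL2 n).integrable_sq (integrable_const _) <|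
              (hbdd n).mono fun ξ hξ =>
                (sq_abs _).symm.trans_le (pow_le_pow_left₀ (abs_nonneg _) hξ 2)
        _ = μ.real Set.univ * c n ^ 2 := by rw [integral_const, smul_eq_mul]
    calc ∫ ξ, (∑ t ∈ range (n + 1), Z t ξ) ^ 2 ∂μ
        = ∫ ξ, (S ξ ^ 2 + 2 * (S ξ * Z n ξ) + Z n ξ ^ 2) ∂μ := by
          simp only [sum_range_succ, S]; congr with ξ; ring
      _ = ∫ ξ, S ξ ^ 2 ∂μ + 2 * ∫ ξ, S ξ * Z n ξ ∂μ + ∫ ξ, Z n ξ ^ 2 ∂μ := by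
          have hSZ : Integrable (fun ξ => S ξ * Z n ξ) μ := hS.integrable_mul (hL2 n)
          rw [integral_add (f := fun ξ => S ξ ^ 2 + 2 * (S ξ * Z n ξ))
              (hS.integrable_sq.add (hSZ.const_mul 2)) (hL2 n).integrable_sq,
            integral_add hS.integrable_sq (hSZ.const_mul 2), integral_const_mul]
      _ ≤ μ.real Set.univ * ∑ t ∈ range (n + 1), c t ^ 2 := by
          rw [horth, sum_range_succ]; linarith

theorem eLpNorm_one_le_of_integral_sq_le {g : Ξ → ℝ} (hg : MemLp g 2 μ) {K : ℝ}
    (hK : ∫ ξ, g ξ ^ 2 ∂μ ≤ K) :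
    eLpNorm g 1 μ ≤ ENNReal.ofReal ((μ.real Set.univ + K) / 2) := by
  have hint : Integrable g μ := hg.integrable one_le_two
  rw [eLpNorm_one_eq_lintegral_enorm, ← ofReal_integral_norm_eq_lintegral_enorm hint]
  refine ENNReal.ofReal_le_ofReal ?_
  calc ∫ ξ, ‖g ξ‖ ∂μ ≤ ∫ ξ, (1 + g ξ ^ 2) / 2 ∂μ :=
        integral_mono hint.norm (((integrable_const 1).add hg.integrable_sq).div_const 2)
          fun ξ => by
            rw [Real.norm_eq_abs]
            nlinarith [sq_nonneg (|g ξ| - 1), sq_abs (g ξ)]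
    _ = (μ.real Set.univ + ∫ ξ, g ξ ^ 2 ∂μ) / 2 := by
        rw [integral_div, integral_add (integrable_const 1) hg.integrable_sq, integral_const,
          smul_eq_mul, mul_one]
    _ ≤ (μ.real Set.univ + K) / 2 := by linarith

theorem ae_exists_tendsto_sum_of_condExp_eq_zero {c : ℕ → ℝ}
    (hZ : ∀ t, StronglyMeasurable[𝒢 (t + 1)] (Z t)) (hbdd : ∀ t, ∀ᵐ ξ ∂μ, |Z t ξ| ≤ c t)
    (hmd : ∀ t, μ[Z t | 𝒢 t] =ᵐ[μ] 0) (hc : Summable fun t => c t ^ 2) :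
    ∀ᵐ ξ ∂μ, ∃ L, Tendsto (fun n => ∑ t ∈ range n, Z t ξ) atTop (𝓝 L) := by
  have hL2 : ∀ t, MemLp (Z t) 2 μ := fun t =>
    .of_bound ((hZ t).mono (𝒢.le _)).aestronglyMeasurable _ (hbdd t)
  have hmart := martingale_sum_of_condExp_eq_zero hZ (fun t => (hL2 t).integrable one_le_two) hmd
  refine hmart.submartingale.exists_ae_tendsto_of_bdd
    (R := ((μ.real Set.univ + μ.real Set.univ * ∑' t, c t ^ 2) / 2).toNNReal) fun n => ?_
  refine eLpNorm_one_le_of_integral_sq_le (memLp_finsetSum _ fun t _ => hL2 t) ?_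
  exact (integral_sq_sum_le_of_condExp_eq_zero hZ hbdd hmd n).trans
    (mul_le_mul_of_nonneg_left (hc.sum_le_tsum _ fun t _ => sq_nonneg _) measureReal_nonneg)

theorem ae_tendsto_inv_mul_sum_of_condExp_eq_zero {C : ℝ}
    (hZ : ∀ t, StronglyMeasurable[𝒢 (t + 1)] (Z t)) (hbdd : ∀ t, ∀ᵐ ξ ∂μ, |Z t ξ| ≤ C)
    (hmd : ∀ t, μ[Z t | 𝒢 t] =ᵐ[μ] 0) :
    ∀ᵐ ξ ∂μ, Tendsto (fun n : ℕ => (n : ℝ)⁻¹ * ∑ t ∈ range n, Z t ξ) atTop (𝓝 0) := by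
  have hsummable : Summable fun t : ℕ => (((t : ℝ) + 1)⁻¹ * C) ^ 2 := by
    have := ((summable_nat_add_iff 1).2 (Real.summable_nat_pow_inv.2 one_lt_two)).mul_left (C ^ 2)
    refine this.congr fun t => ?_
    rw [mul_pow, inv_pow, Nat.cast_succ, mul_comm]
  have hconv := ae_exists_tendsto_sum_of_condExp_eq_zero
    (Z := fun t ξ => ((t : ℝ) + 1)⁻¹ * Z t ξ) (c := fun t => ((t : ℝ) + 1)⁻¹ * C)
    (fun t => (hZ t).const_mul _)
    (fun t => (hbdd t).mono fun ξ hξ => by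
      rw [abs_mul, abs_of_pos (by positivity)]
      exact mul_le_mul_of_nonneg_left hξ (by positivity))
    (fun t => (condExp_smul ((t : ℝ) + 1)⁻¹ (Z t) _).trans
      ((hmd t).mono fun ξ hξ => by simp [hξ]))
    hsummable
  filter_upwards [hconv] with ξ ⟨L, hL⟩ using kronecker_tendsto_inv_mul_sum hL

end MartingaleDifferences

section CenteredIncrements

variable {Ξ : Type*} {m0 : MeasurableSpace Ξ} {μ : Measure Ξ} [IsFiniteMeasure μ]

theorem condExp_mul_sub_condExp_eq_zero {m : MeasurableSpace Ξ} (hm : m ≤ m0) {g Y : Ξ → ℝ}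
    (hg : StronglyMeasurable[m] g) {B : ℝ} (hgB : ∀ᵐ ξ ∂μ, |g ξ| ≤ B) (hY : Integrable Y μ) :
    μ[g * (Y - μ[Y | m]) | m] =ᵐ[μ] 0 := by
  have hcentered : μ[Y - μ[Y | m] | m] =ᵐ[μ] 0 := by
    refine (condExp_sub hY integrable_condExp m).trans ?_
    rw [condExp_of_stronglyMeasurable hm stronglyMeasurable_condExp integrable_condExp, sub_self]
  calc μ[g * (Y - μ[Y | m]) | m] =ᵐ[μ] g * μ[Y - μ[Y | m] | m] :=
        condExp_stronglyMeasurable_mul_of_bound hm hg (hY.sub integrable_condExp) B hgB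
    _ =ᵐ[μ] 0 := hcentered.mono fun ξ hξ => by simp [hξ]

theorem ae_tendsto_inv_mul_sum_mul_sub_condExp {𝒢 : Filtration ℕ m0} {g Y : ℕ → Ξ → ℝ}
    {B C : ℝ} (hg : ∀ t, StronglyMeasurable[𝒢 t] (g t)) (hgB : ∀ t, ∀ᵐ ξ ∂μ, |g t ξ| ≤ B)
    (hY : ∀ t, StronglyMeasurable[𝒢 (t + 1)] (Y t)) (hYC : ∀ t, ∀ᵐ ξ ∂μ, |Y t ξ| ≤ C) :
    ∀ᵐ ξ ∂μ, Tendsto (fun n : ℕ => (n : ℝ)⁻¹ *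
      ∑ t ∈ range n, g t ξ * (Y t ξ - μ[Y t | 𝒢 t] ξ)) atTop (𝓝 0) := by
  refine ae_tendsto_inv_mul_sum_of_condExp_eq_zero (Z := fun t => g t * (Y t - μ[Y t | 𝒢 t]))
    (C := B * (C + C)) (fun t => ?_) (fun t => ?_) fun t =>
      condExp_mul_sub_condExp_eq_zero (𝒢.le t) (hg t) (hgB t)
        (.of_bound ((hY t).mono (𝒢.le _)).aestronglyMeasurable C (hYC t))
  · exact ((hg t).mono (𝒢.mono t.le_succ)).mul
      ((hY t).sub (stronglyMeasurable_condExp.mono (𝒢.mono t.le_succ)))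
  · filter_upwards [hgB t, hYC t, ae_bdd_abs_condExp_of_ae_bdd_abs (m := 𝒢 t) (hYC t)]
      with ξ hgξ hYξ hcondξ
    rw [Pi.mul_apply, abs_mul]
    exact mul_le_mul hgξ ((abs_sub _ _).trans (add_le_add hYξ hcondξ)) (abs_nonneg _)
      ((abs_nonneg _).trans hgξ)

end CenteredIncrements

theorem EuclideanSpace.tendsto_nhds_zero_of_forall_apply {ι α : Type*} [Fintype ι]
    {l : Filter α} {v : α → EuclideanSpace ℝ ι} (h : ∀ i, Tendsto (fun x => v x i) l (𝓝 0)) :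
    Tendsto v l (𝓝 0) := by
  simpa [Function.comp_def] using
    ((PiLp.continuous_toLp 2 fun _ : ι => ℝ).tendsto 0).comp (tendsto_pi_nhds.2 h)


variable {Ω : Type*} [Fintype Ω] [DecidableEq Ω]

theorem ite_diracVec_sub_apply {ι : Type*} [DecidableEq ι] (P : Prop) [Decidable P] (ω a : ι)
    (v : EuclideanSpace ℝ ι) :
    (if P then diracVec ω - v else 0) a =
      (if P then 1 else 0) * ((if ω = a then 1 else 0) - v a) := by
  by_cases hP : P
  · simp [hP, diracVec, eq_comm]
  · simp [hP]

open Classical in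
theorem averaged_prediction_errors_vanish_general
    {Ξ : Type*} {m0 : MeasurableSpace Ξ} (ℙ : Measure Ξ) [IsProbabilityMeasure ℙ]
    (𝒢 : Filtration ℕ m0)
    [MeasurableSpace Ω] [MeasurableSingletonClass Ω]
    (X : ℕ → Ξ → Ω) (hX : ∀ t, Measurable[𝒢 (t + 1)] (X t))
    (F : Finset (EuclideanSpace ℝ Ω))
    (f : ℕ → Ξ → EuclideanSpace ℝ Ω)
    (hf : ∀ t, Measurable[𝒢 t] (f t))
    (p : ℕ → Ξ → EuclideanSpace ℝ Ω)
    (hp : ∀ t a, (fun ξ => p t ξ a) =ᵐ[ℙ]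
      ℙ[(fun ξ => if X t ξ = a then (1 : ℝ) else 0) | 𝒢 t]) :
    ∀ᵐ ξ ∂ℙ, ∀ q ∈ F,
      Tendsto (fun T : ℕ => (T : ℝ)⁻¹ •
          ∑ t ∈ Finset.range T, (if f t ξ = q then diracVec (X t ξ) - p t ξ else 0))
        atTop (nhds 0) := by
  have habs_ite_le_one : ∀ (P : Prop) [Decidable P], |(if P then 1 else 0 : ℝ)| ≤ 1 := by
    intro P _; split_ifs <;> simp
  have hconv : ∀ (a : Ω) (q : EuclideanSpace ℝ Ω), ∀ᵐ ξ ∂ℙ, Tendsto (fun n : ℕ => (n : ℝ)⁻¹ *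
      ∑ t ∈ range n, (if f t ξ = q then 1 else 0) * ((if X t ξ = a then 1 else 0) -
        ℙ[fun ξ => if X t ξ = a then (1 : ℝ) else 0 | 𝒢 t] ξ)) atTop (𝓝 0) := fun a q =>
    ae_tendsto_inv_mul_sum_mul_sub_condExp
      (fun t => (Measurable.ite (hf t (measurableSet_singleton q)) measurable_const
        measurable_const).stronglyMeasurable) (fun t => ae_of_all _ fun _ => habs_ite_le_one _)
      (fun t => (Measurable.ite (hX t (measurableSet_singleton a)) measurable_const
        measurable_const).stronglyMeasurable) (fun t => ae_of_all _ fun _ => habs_ite_le_one _)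
  have hp_all : ∀ᵐ ξ ∂ℙ, ∀ t a, p t ξ a = ℙ[fun ξ => if X t ξ = a then (1 : ℝ) else 0 | 𝒢 t] ξ :=
    ae_all_iff.2 fun t => ae_all_iff.2 (hp t)
  filter_upwards [ae_all_iff.2 fun a => (ae_ball_iff F.countable_toSet).2 fun q _ => hconv a q,
    hp_all] with ξ hconvξ hpξ q hq
  refine EuclideanSpace.tendsto_nhds_zero_of_forall_apply fun a => ?_
  simpa [ite_diracVec_sub_apply, hpξ] using hconvξ a q hq

open Classical in
/-- Almost surely, for every forecast value `q ∈ F`, the averaged prediction errors vanish: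
`(1/T) Σ_{t<T} 1{f_t = q} (δ_{X_t} − p_t) → 0` as `T → ∞`. -/
theorem averaged_prediction_errors_vanish
    {Ξ : Type*} {m0 : MeasurableSpace Ξ} (ℙ : Measure Ξ) [IsProbabilityMeasure ℙ]
    (𝒢 : Filtration ℕ m0) (h0 : 𝒢 0 = ⊥)
    [MeasurableSpace Ω] [MeasurableSingletonClass Ω]
    (X : ℕ → Ξ → Ω) (hX : ∀ t, Measurable[𝒢 (t + 1)] (X t))
    (F : Finset (EuclideanSpace ℝ Ω))
    (f : ℕ → Ξ → EuclideanSpace ℝ Ω) (hfF : ∀ t ξ, f t ξ ∈ F)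
    (hf : ∀ t, Measurable[𝒢 t] (f t))
    (p : ℕ → Ξ → EuclideanSpace ℝ Ω)
    (hp : ∀ t a, (fun ξ => p t ξ a) =ᵐ[ℙ]
      ℙ[(fun ξ => if X t ξ = a then (1 : ℝ) else 0) | 𝒢 t]) :
    ∀ᵐ ξ ∂ℙ, ∀ q ∈ F,
      Tendsto (fun T : ℕ => (T : ℝ)⁻¹ •
          ∑ t ∈ Finset.range T, (if f t ξ = q then diracVec (X t ξ) - p t ξ else 0))
        atTop (nhds 0) :=
  averaged_prediction_errors_vanish_general ℙ 𝒢 X hX F f hf p hp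

end
end

section
/- Let F and Ω be finite sets, T : Ω × F → ΔΩ a transition kernel, and η a probability distribution on F × Ω × F satisfying the balance equations Σ_{f̃, ω̃} η(f̃, ω̃, f) · T(ω | ω̃, f̃) = η̄(f, ω) for all (f, ω), where η̄(f, ω) = Σ_{f''} η(f, ω, f''). Define the memory-one policy σ by σ(f | f̃, ω̃) = η(f̃, ω̃, f) / η̄(f̃, ω̃) if η̄(f̃, ω̃) > 0, and σ(f | f̃, ω̃) = η_F(f) := Σ_ω η̄(f, ω) otherwise. Then η̄ is an invariant distribution of the induced Markov chain on F × Ω with transition matrix f_σ(f, ω | f̃, ω̃) = T(ω | ω̃, f̃) · σ(f | f̃, ω̃): for all (f, ω), Σ_{f̃, ω̃} η̄(f̃, ω̃) f_σ(f, ω | f̃, ω̃) = η̄(f, ω). -/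
/-- Given a transition kernel `T` on `Ω` controlled by forecasts in `F` and a distribution
`η` on triples (previous forecast, previous state, current forecast) satisfying the balance
equations, the marginal `η̄(f, ω) = Σ_{f''} η(f, ω, f'')` is an invariant distribution of the
Markov chain on `F × Ω` induced by the memory-one policy `σ` derived from `η`.
Here `T wp fp ω` denotes `T(ω | wp, fp)` and `σ fp wp f` denotes `σ(f | fp, wp)`. -/
theorem invariant_of_balance
    {F Ω : Type*} [Fintype F] [Fintype Ω]
    (T : Ω → F → Ω → ℝ)
    (hT0 : ∀ wp fp ω, 0 ≤ T wp fp ω) (hT1 : ∀ wp fp, ∑ ω, T wp fp ω = 1)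
    (η : F → Ω → F → ℝ)
    (hη0 : ∀ fp wp f, 0 ≤ η fp wp f)
    (hη1 : ∑ fp, ∑ wp, ∑ f, η fp wp f = 1)
    (hbal : ∀ f ω, ∑ fp, ∑ wp, η fp wp f * T wp fp ω = ∑ f2, η f ω f2)
    (σ : F → Ω → F → ℝ)
    (hσ : ∀ fp wp f, σ fp wp f =
      if 0 < ∑ f2, η fp wp f2 then η fp wp f / ∑ f2, η fp wp f2
      else ∑ ω, ∑ f2, η f ω f2) :
    ∀ f ω, ∑ fp, ∑ wp, (∑ f2, η fp wp f2) * (T wp fp ω * σ fp wp f)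
      = ∑ f2, η f ω f2 := by
  intro f ω
  rw [← hbal f ω]
  refine Finset.sum_congr rfl fun fp _ => Finset.sum_congr rfl fun wp _ => ?_
  rw [hσ]
  by_cases h : 0 < ∑ f2, η fp wp f2
  · rw [if_pos h]
    field_simp
  · rw [if_neg h]
    have hz : ∑ f2, η fp wp f2 = 0 :=
      le_antisymm (not_lt.mp h) (Finset.sum_nonneg fun _ _ => hη0 _ _ _)
    have hf : η fp wp f = 0 :=
      (Finset.sum_eq_zero_iff_of_nonneg fun i _ => hη0 fp wp i).mp hz f (Finset.mem_univ f)
    rw [hz, hf]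
    ring
end

section
/- Let Ω be a finite set and h : ΔΩ → ℝ a bounded function on the probability simplex. Then the closed convex hull of h — the pointwise supremum of all affine functions on ℝ^Ω whose restriction to ΔΩ is everywhere ≤ h, equivalently the largest lower semicontinuous convex function on ΔΩ below h — is a continuous function on ΔΩ. -/
/-!
The envelope `g` is a supremum of continuous affine functions, hence convex and lower
semicontinuous. Upper semicontinuity comes from the polyhedral shape of the simplex: for every
`t ∈ (0, 1]`, each point `y` of the simplex close enough to `x` is `(1 - t) x + t z` with `z` in the
simplex, so convexity and the bound `g ≤ M` give `g y ≤ g x + t (M - g x)`.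
-/

open Filter Topology

section ClosedConvexEnvelope

variable {E : Type*} [AddCommGroup E] [Module ℝ E] {s : Set E} {h : E → ℝ}

def affineMinorants (s : Set E) (h : E → ℝ) : Set (E →ᵃ[ℝ] ℝ) :=
  {ℓ | ∀ y ∈ s, ℓ y ≤ h y}

/-- Outside `s` the supremum may be unbounded, and with no affine minorant it is empty; `sSup`
then returns the junk value `0`. -/
noncomputable def closedConvexEnvelope (s : Set E) (h : E → ℝ) (x : E) : ℝ :=
  sSup ((fun ℓ : E →ᵃ[ℝ] ℝ => ℓ x) '' affineMinorants s h)

theorem bddAbove_image_affineMinorants {x : E} (hx : x ∈ s) :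
    BddAbove ((fun ℓ : E →ᵃ[ℝ] ℝ => ℓ x) '' affineMinorants s h) :=
  ⟨h x, Set.forall_mem_image.2 fun _ hℓ => hℓ x hx⟩

theorem le_closedConvexEnvelope {ℓ : E →ᵃ[ℝ] ℝ} (hℓ : ℓ ∈ affineMinorants s h) {x : E}
    (hx : x ∈ s) : ℓ x ≤ closedConvexEnvelope s h x :=
  le_csSup (bddAbove_image_affineMinorants hx) (Set.mem_image_of_mem _ hℓ)

theorem closedConvexEnvelope_le (hne : (affineMinorants s h).Nonempty) {x : E} (hx : x ∈ s) :
    closedConvexEnvelope s h x ≤ h x :=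
  csSup_le (hne.image _) (Set.forall_mem_image.2 fun _ hℓ => hℓ x hx)

theorem convexOn_closedConvexEnvelope (hs : Convex ℝ s) (hne : (affineMinorants s h).Nonempty) :
    ConvexOn ℝ s (closedConvexEnvelope s h) := by
  refine ⟨hs, fun x hx y hy a b ha hb hab => csSup_le (hne.image _) ?_⟩
  rintro _ ⟨ℓ, hℓ, rfl⟩
  simp only [Convex.combo_affine_apply hab, smul_eq_mul]
  gcongr
  exacts [le_closedConvexEnvelope hℓ hx, le_closedConvexEnvelope hℓ hy]

end ClosedConvexEnvelope

theorem lowerSemicontinuousOn_closedConvexEnvelope {E : Type*} [NormedAddCommGroup E]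
    [NormedSpace ℝ E] [FiniteDimensional ℝ E] {s : Set E} {h : E → ℝ}
    (hne : (affineMinorants s h).Nonempty) :
    LowerSemicontinuousOn (closedConvexEnvelope s h) s := by
  intro x _ r hr
  obtain ⟨_, ⟨ℓ, hℓ, rfl⟩, hrℓ⟩ := exists_lt_of_lt_csSup (hne.image _) hr
  filter_upwards [ℓ.continuous_of_finiteDimensional.continuousAt.continuousWithinAt.eventually
    (lt_mem_nhds hrℓ), self_mem_nhdsWithin] with y hy hys
  exact hy.trans_le (le_closedConvexEnvelope hℓ hys)

/-- `hcone` says that near `x`, the set `s` looks like a cone with apex `x`. -/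
theorem ConvexOn.upperSemicontinuousWithinAt_of_eventually_lineMap {E : Type*}
    [AddCommGroup E] [Module ℝ E] [TopologicalSpace E] {s : Set E} {f : E → ℝ} {M : ℝ}
    (hf : ConvexOn ℝ s f) (hM : ∀ y ∈ s, f y ≤ M) {x : E} (hx : x ∈ s)
    (hcone : ∀ t : ℝ, 0 < t → ∀ᶠ y in 𝓝[s] x, ∃ z ∈ s, AffineMap.lineMap x z t = y) :
    UpperSemicontinuousWithinAt f s x := by
  intro c hc
  have hlim : Tendsto (fun t : ℝ => f x + t * (M - f x)) (𝓝[>] 0) (𝓝 (f x)) := by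
    simpa using (Continuous.tendsto (f := fun t : ℝ => f x + t * (M - f x)) (by fun_prop) 0
      ).mono_left nhdsWithin_le_nhds
  obtain ⟨t, ⟨ht0, ht1⟩, htc⟩ :=
    (Filter.Eventually.and (Ioc_mem_nhdsGT zero_lt_one) (hlim.eventually_lt_const hc)).exists
  filter_upwards [hcone t ht0] with y ⟨z, hz, hzy⟩
  rw [← hzy]
  calc f (AffineMap.lineMap x z t) ≤ (1 - t) * f x + t * f z := by
        rw [AffineMap.lineMap_apply_module]
        exact hf.2 hx hz (by linarith) ht0.le (by ring)
    _ ≤ (1 - t) * f x + t * M := by gcongr; exact hM z hz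
    _ < c := by linarith

theorem exists_mem_stdSimplex_lineMap_eq {ι : Type*} [Fintype ι] {x y : ι → ℝ}
    (hx : x ∈ stdSimplex ℝ ι) (hy : y ∈ stdSimplex ℝ ι) {t : ℝ} (ht : 0 < t)
    (hxy : ∀ i, (1 - t) * x i ≤ y i) :
    ∃ z ∈ stdSimplex ℝ ι, AffineMap.lineMap x z t = y := by
  refine ⟨t⁻¹ • (y - (1 - t) • x), ⟨fun i => ?_, ?_⟩, ?_⟩
  · simpa using mul_nonneg (inv_nonneg.2 ht.le) (sub_nonneg.2 (hxy i))
  · simp [← Finset.mul_sum, Finset.sum_sub_distrib, hx.2, hy.2, ht.ne']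
  · rw [AffineMap.lineMap_apply_module, smul_smul, mul_inv_cancel₀ ht.ne', one_smul]
    abel

theorem eventually_exists_mem_stdSimplex_lineMap_eq {ι : Type*} [Fintype ι] {x : ι → ℝ}
    (hx : x ∈ stdSimplex ℝ ι) {t : ℝ} (ht : 0 < t) :
    ∀ᶠ y in 𝓝[stdSimplex ℝ ι] x, ∃ z ∈ stdSimplex ℝ ι, AffineMap.lineMap x z t = y := by
  have hcoord : ∀ i, ∀ᶠ y in 𝓝[stdSimplex ℝ ι] x, (1 - t) * x i ≤ y i := by
    intro i
    rcases (hx.1 i).eq_or_lt with hxi | hxi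
    · filter_upwards [self_mem_nhdsWithin] with y hy
      simpa [← hxi] using hy.1 i
    · have : (1 - t) * x i < x i := by nlinarith
      exact ((continuous_apply i).continuousWithinAt.eventually (lt_mem_nhds this)).mono
        fun _ hy => hy.le
  filter_upwards [eventually_all.2 hcoord, self_mem_nhdsWithin] with y hxy hy
  exact exists_mem_stdSimplex_lineMap_eq hx hy ht hxy

/-- The closed convex hull of a bounded function `h` on the probability simplex over a
finite set `Ω` — the pointwise supremum of all affine functions on `ℝ^Ω` lying below `h` on
the simplex — is a continuous function on the simplex. -/
theorem closedConvexHull_continuousOn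
    {Ω : Type*} [Fintype Ω] (h : (Ω → ℝ) → ℝ)
    (M : ℝ) (hbdd : ∀ x ∈ stdSimplex ℝ Ω, |h x| ≤ M) :
    ContinuousOn
      (fun x : Ω → ℝ => sSup { r : ℝ | ∃ ℓ : (Ω → ℝ) →ᵃ[ℝ] ℝ,
        (∀ y ∈ stdSimplex ℝ Ω, ℓ y ≤ h y) ∧ ℓ x = r })
      (stdSimplex ℝ Ω) := by
  change ContinuousOn (closedConvexEnvelope (stdSimplex ℝ Ω) h) _
  have hne : (affineMinorants (stdSimplex ℝ Ω) h).Nonempty :=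
    ⟨AffineMap.const ℝ _ (-M), fun y hy => neg_le_of_abs_le (hbdd y hy)⟩
  have hM : ∀ y ∈ stdSimplex ℝ Ω, closedConvexEnvelope (stdSimplex ℝ Ω) h y ≤ M :=
    fun y hy => (closedConvexEnvelope_le hne hy).trans (le_of_abs_le (hbdd y hy))
  refine continuousOn_iff_lower_upperSemicontinuousOn.2
    ⟨lowerSemicontinuousOn_closedConvexEnvelope hne, fun x hx => ?_⟩
  exact (convexOn_closedConvexEnvelope (convex_stdSimplex ℝ Ω) hne
    ).upperSemicontinuousWithinAt_of_eventually_lineMap hM hx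
    fun t ht => eventually_exists_mem_stdSimplex_lineMap_eq hx ht
end
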